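/- (Bound |Λ^α w_{λ,κ}| ≤ C w_{λ,κ}, stated via second differences.) Let n ≥ 1 be an integer, α ∈ (0,2), λ ∈ (0,1), and κ ≥ 2 an even integer, and assume that either α ≥ 1 or 2λ < α. Let w = w_{λ,κ}. Then there exists a constant C = C(n,α,λ,κ) > 0 such that for all x ∈ ℝⁿ, the integral ∫_{ℝⁿ} |2 w(x) − w(x+y) − w(x−y)| / |y|^{n+α} dy is finite and bounded by C · w(x). In particular the fractional Laplacian Λ^α w(x) = (C_{n,α}/2) ∫_{ℝⁿ} (2 w(x) − w(x+y) − w(x−y)) / |y|^{n+α} dy is given by an absolutely convergent integral and satisfies |Λ^α w(x)| ≤ C' · w(x) for all x. -/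

import Mathlib

/-!
Split the integral at `‖y‖ = 1`.

Far from the origin, Peetre's inequality `1 + ‖x‖ ≤ (1 + ‖x + v‖)(1 + ‖v‖)` together with
`w ≍ (1 + ‖x‖)^(-λ)` gives `w (x + v) ≤ 2^λ (1 + ‖v‖)^λ w x`, so the second difference is
`O((1 + ‖y‖)^λ w x)`, which is integrable against `‖y‖^(-n-α)` at infinity because `λ < α`.

Near the origin, evenness of `κ = 2m` makes `w z = ρ (‖z‖²)` with `ρ s = (1 + s^m)^(-λ/κ)` smooth
on `[0, ∞)`, and `|ρ'| ≤ C ρ`, `s |ρ''| ≤ C ρ`. Along the line `t ↦ x + t y` Cauchy–Schwarz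
controls the chain rule, so the second derivative is `O(‖y‖² w (x + t y)) = O(‖y‖² w x)` and the
second difference is `O(‖y‖² w x)`, integrable against `‖y‖^(-n-α)` near `0` because `α < 2`.
-/

open Real Set Metric MeasureTheory Module

/-- The Muckenhoupt-type weight `w_{λ,κ}(x) = (1 + |x|^κ)^(−λ/κ)` on `ℝⁿ`. -/
noncomputable def weight (n : ℕ) (lam : ℝ) (kap : ℕ) (x : EuclideanSpace ℝ (Fin n)) : ℝ :=
  (1 + ‖x‖ ^ kap) ^ (-(lam / (kap : ℝ)))

theorem abs_add_sub_two_mul_le_of_hasDerivAt {φ φ' φ'' : ℝ → ℝ} {M : ℝ}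
    (hφ : ∀ t, HasDerivAt φ (φ' t) t) (hφ' : ∀ t, HasDerivAt φ' (φ'' t) t)
    (hM : ∀ t ∈ Icc (-1 : ℝ) 1, |φ'' t| ≤ M) :
    |φ 1 + φ (-1) - 2 * φ 0| ≤ 2 * M := by
  -- The derivative of the even part `φ t + φ (-t)` vanishes at `0`: use the mean value
  -- inequality twice.
  have hodd : ∀ t, HasDerivAt (fun t => φ' t - φ' (-t)) (φ'' t + φ'' (-t)) t := fun t =>
    ((hφ' t).sub ((hφ' (-t)).comp t (hasDerivAt_neg t))).congr_deriv (by ring)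
  have heven : ∀ t, HasDerivAt (fun t => φ t + φ (-t)) (φ' t - φ' (-t)) t := fun t =>
    ((hφ t).add ((hφ (-t)).comp t (hasDerivAt_neg t))).congr_deriv (by ring)
  have hodd_bound : ∀ t ∈ Icc (0 : ℝ) 1, ‖φ'' t + φ'' (-t)‖ ≤ 2 * M := fun t ht => by
    have h1 := hM t ⟨by linarith [ht.1], ht.2⟩
    have h2 := hM (-t) ⟨by linarith [ht.2], by linarith [ht.1]⟩
    rw [Real.norm_eq_abs, two_mul]
    exact (abs_add_le _ _).trans (add_le_add h1 h2)
  have heven_bound : ∀ t ∈ Icc (0 : ℝ) 1, ‖φ' t - φ' (-t)‖ ≤ 2 * M := fun t ht => by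
    have := (convex_Icc (0 : ℝ) 1).norm_image_sub_le_of_norm_hasDerivWithin_le
      (fun t _ => (hodd t).hasDerivWithinAt) hodd_bound (left_mem_Icc.2 zero_le_one) ht
    simp only [neg_zero, sub_self, sub_zero, Real.norm_eq_abs] at this ⊢
    have hM0 : 0 ≤ M := (abs_nonneg _).trans (hM 0 ⟨by norm_num, by norm_num⟩)
    rw [abs_of_nonneg ht.1] at this
    nlinarith [ht.2]
  have := (convex_Icc (0 : ℝ) 1).norm_image_sub_le_of_norm_hasDerivWithin_le
    (fun t _ => (heven t).hasDerivWithinAt) heven_bound (left_mem_Icc.2 zero_le_one)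
    (right_mem_Icc.2 zero_le_one)
  simpa [two_mul, ← sub_sub, Real.norm_eq_abs] using this

lemma abs_mul_mul_add_mul_le {g g' g'' s q c a b : ℝ} (hc : 0 ≤ c) (hq : q ^ 2 ≤ 4 * s * c)
    (hg' : |g'| ≤ a * g) (hg'' : s * |g''| ≤ b * g) :
    |g'' * q * q + g' * (2 * c)| ≤ (4 * b + 2 * a) * c * g :=
  calc |g'' * q * q + g' * (2 * c)| ≤ |g''| * q ^ 2 + |g'| * (2 * c) := by
        refine (abs_add_le _ _).trans_eq ?_
        rw [mul_assoc, ← sq, abs_mul, abs_mul, abs_sq, abs_of_nonneg (by positivity : 0 ≤ 2 * c)]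
    _ ≤ |g''| * (4 * s * c) + a * g * (2 * c) := by gcongr
    _ = 4 * c * (s * |g''|) + 2 * a * c * g := by ring
    _ ≤ 4 * c * (b * g) + 2 * a * c * g := by gcongr
    _ = (4 * b + 2 * a) * c * g := by ring

theorem abs_two_mul_sub_sub_comp_norm_sq_le {F : Type*} [NormedAddCommGroup F]
    [InnerProductSpace ℝ F] {G G' G'' : ℝ → ℝ} {a b M : ℝ}
    (ha : 0 ≤ a) (hb : 0 ≤ b)
    (hG : ∀ s, 0 ≤ s → HasDerivAt G (G' s) s) (hG' : ∀ s, 0 ≤ s → HasDerivAt G' (G'' s) s)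
    (hG'_le : ∀ s, 0 ≤ s → |G' s| ≤ a * G s)
    (hG''_le : ∀ s, 0 ≤ s → s * |G'' s| ≤ b * G s)
    (x y : F) (hM : ∀ t ∈ Icc (-1 : ℝ) 1, G (‖x + t • y‖ ^ 2) ≤ M) :
    |2 * G (‖x‖ ^ 2) - G (‖x + y‖ ^ 2) - G (‖x - y‖ ^ 2)|
      ≤ 2 * ((4 * b + 2 * a) * ‖y‖ ^ 2 * M) := by
  set p : ℝ → ℝ := fun t => ‖x + t • y‖ ^ 2
  set q : ℝ → ℝ := fun t => 2 * inner ℝ (x + t • y) y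
  have hline : ∀ t : ℝ, HasDerivAt (fun t : ℝ => x + t • y) y t := fun t => by
    simpa using ((hasDerivAt_id t).smul_const y).const_add x
  have hp : ∀ t, HasDerivAt p (q t) t := fun t => (hline t).norm_sq
  have hq : ∀ t, HasDerivAt q (2 * ‖y‖ ^ 2) t := fun t => by
    simpa [real_inner_self_eq_norm_sq] using
      ((hline t).inner ℝ (hasDerivAt_const t y)).const_mul 2
  have hφ : ∀ t, HasDerivAt (fun t => G (p t)) (G' (p t) * q t) t := fun t =>
    (hG _ (by positivity)).comp t (hp t)
  have hφ' : ∀ t, HasDerivAt (fun t => G' (p t) * q t)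
      (G'' (p t) * q t * q t + G' (p t) * (2 * ‖y‖ ^ 2)) t := fun t =>
    ((hG' _ (by positivity)).comp t (hp t)).mul (hq t)
  have hCS : ∀ t, q t ^ 2 ≤ 4 * p t * ‖y‖ ^ 2 := fun t => by
    have := pow_le_pow_left₀ (abs_nonneg _) (abs_real_inner_le_norm (x + t • y) y) 2
    rw [sq_abs, mul_pow] at this
    simp only [p, q]
    linarith
  have hφ''_le : ∀ t ∈ Icc (-1 : ℝ) 1, |G'' (p t) * q t * q t + G' (p t) * (2 * ‖y‖ ^ 2)|
      ≤ (4 * b + 2 * a) * ‖y‖ ^ 2 * M := fun t ht =>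
    (abs_mul_mul_add_mul_le (by positivity) (hCS t) (hG'_le _ (by positivity))
      (hG''_le _ (by positivity))).trans (by gcongr; exact hM t ht)
  have := abs_add_sub_two_mul_le_of_hasDerivAt hφ hφ' hφ''_le
  simp only [p, one_smul, neg_one_smul, zero_smul, add_zero, ← sub_eq_add_neg] at this
  rwa [← abs_neg, show -(2 * G (‖x‖ ^ 2) - G (‖x + y‖ ^ 2) - G (‖x - y‖ ^ 2))
    = G (‖x + y‖ ^ 2) + G (‖x - y‖ ^ 2) - 2 * G (‖x‖ ^ 2) by ring]

lemma pow_le_one_add_pow {s : ℝ} (hs : 0 ≤ s) {k N : ℕ} (hkN : k ≤ N) : s ^ k ≤ 1 + s ^ N := by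
  rcases le_total s 1 with h | h
  · linarith [pow_le_one₀ (n := k) hs h, pow_nonneg hs N]
  · linarith [pow_le_pow_right₀ h hkN]

lemma natCast_mul_pow_sub_one_mul (k : ℕ) (s : ℝ) : (k : ℝ) * s ^ (k - 1) * s = k * s ^ k := by
  rcases eq_or_ne k 0 with rfl | hk
  · simp
  · rw [mul_assoc, pow_sub_one_mul hk]

section WeightProfile

variable {m : ℕ} {d s : ℝ}

noncomputable def weightProfile (m : ℕ) (d s : ℝ) : ℝ := (1 + s ^ m) ^ (-d)

noncomputable def weightProfileDeriv (m : ℕ) (d s : ℝ) : ℝ :=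
  -(d * m) * s ^ (m - 1) * (1 + s ^ m) ^ (-d - 1)

/- The truncated exponent `m - 1 - 1` is wrong only for `m = 1`, where its coefficient
`(m - 1 : ℕ)` vanishes. -/
noncomputable def weightProfileDeriv2 (m : ℕ) (d s : ℝ) : ℝ :=
  d * m * (1 + s ^ m) ^ (-d - 1 - 1) *
    ((d + 1) * m * s ^ (m - 1) * s ^ (m - 1) - ((m - 1 : ℕ) : ℝ) * s ^ (m - 1 - 1) * (1 + s ^ m))

lemma one_add_pow_rpow_sub_one (hs : 0 ≤ s) (y : ℝ) :
    (1 + s ^ m) ^ (y - 1) = (1 + s ^ m) ^ y / (1 + s ^ m) :=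
  rpow_sub_one (by positivity) y

lemma hasDerivAt_weightProfile (hs : 0 ≤ s) :
    HasDerivAt (weightProfile m d) (weightProfileDeriv m d s) s :=
  (((hasDerivAt_pow m s).const_add 1).rpow_const (Or.inl (by positivity))).congr_deriv
    (by rw [weightProfileDeriv]; ring)

lemma hasDerivAt_weightProfileDeriv (hs : 0 ≤ s) :
    HasDerivAt (weightProfileDeriv m d) (weightProfileDeriv2 m d s) s := by
  refine (((hasDerivAt_pow (m - 1) s).const_mul (-(d * m))).mul
    (((hasDerivAt_pow m s).const_add 1).rpow_const (Or.inl (by positivity)))).congr_deriv ?_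
  rw [weightProfileDeriv2, one_add_pow_rpow_sub_one hs (-d - 1), one_add_pow_rpow_sub_one hs (-d)]
  generalize (1 + s ^ m) ^ (-d) = U
  field_simp
  ring

lemma abs_weightProfileDeriv_le (hd : 0 ≤ d) (hs : 0 ≤ s) :
    |weightProfileDeriv m d s| ≤ d * m * weightProfile m d s := by
  rw [weightProfileDeriv, weightProfile, one_add_pow_rpow_sub_one hs, abs_mul, abs_mul, abs_neg,
    abs_of_nonneg (by positivity), abs_of_nonneg (by positivity), abs_of_nonneg (by positivity)]
  set u := 1 + s ^ m
  calc d * m * s ^ (m - 1) * (u ^ (-d) / u) ≤ d * m * u * (u ^ (-d) / u) := by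
        gcongr; exact pow_le_one_add_pow hs (Nat.sub_le m 1)
    _ = d * m * u ^ (-d) := by field_simp [(by positivity : 0 < u).ne']

lemma mul_abs_weightProfileDeriv2_le (hm : m ≠ 0) (hd : 0 ≤ d) (hs : 0 ≤ s) :
    s * |weightProfileDeriv2 m d s| ≤ d * (d + 2) * m ^ 2 * weightProfile m d s := by
  rw [weightProfileDeriv2, weightProfile, one_add_pow_rpow_sub_one hs (-d - 1),
    one_add_pow_rpow_sub_one hs (-d)]
  set u := 1 + s ^ m
  set A := (d + 1) * m * s ^ (m - 1) * s ^ (m - 1)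
  set B := ((m - 1 : ℕ) : ℝ) * s ^ (m - 1 - 1) * u
  have hu : 0 < u := by positivity
  have hsm : s ^ m ≤ u := le_add_of_nonneg_left zero_le_one
  have hsm1 : s ^ (m - 1) ≤ u := pow_le_one_add_pow hs (Nat.sub_le m 1)
  have hA : s * A ≤ (d + 1) * m * u * u := by
    rw [show s * A = (d + 1) * m * (s * s ^ (m - 1)) * s ^ (m - 1) by ring, mul_pow_sub_one hm]
    gcongr
  have hB : s * B ≤ m * u * u := by
    rw [show s * B = ((m - 1 : ℕ) : ℝ) * s ^ (m - 1 - 1) * s * u by ring,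
      natCast_mul_pow_sub_one_mul]
    gcongr
    exact_mod_cast Nat.sub_le m 1
  have hAB : |A - B| ≤ A + B := abs_sub_le_iff.2
    ⟨by linarith [show 0 ≤ B by positivity], by linarith [show 0 ≤ A by positivity]⟩
  calc s * |d * m * (u ^ (-d) / u / u) * (A - B)|
        = d * m * (u ^ (-d) / u / u) * s * |A - B| := by
        rw [abs_mul, abs_of_nonneg (by positivity)]; ring
    _ ≤ d * m * (u ^ (-d) / u / u) * s * (A + B) := by gcongr
    _ = d * m * (u ^ (-d) / u / u) * (s * A + s * B) := by ring
    _ ≤ d * m * (u ^ (-d) / u / u) * ((d + 1) * m * u * u + m * u * u) := by gcongr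
    _ = d * (d + 2) * m ^ 2 * u ^ (-d) := by field_simp; ring

end WeightProfile

section Kernel

variable {E : Type*} [NormedAddCommGroup E]

noncomputable def kernelMajorant (s lam : ℝ) (y : E) : ℝ :=
  (ball (0 : E) 1).indicator (fun y => ‖y‖ ^ (2 - s)) y + (1 + ‖y‖) ^ (-(s - lam))

lemma kernelMajorant_nonneg (s lam : ℝ) (y : E) : 0 ≤ kernelMajorant s lam y :=
  add_nonneg (indicator_nonneg (fun y _ => by positivity) y) (by positivity)

lemma abs_div_rpow_le_kernelMajorant {Δ A B s lam : ℝ} {y : E} (hA : 0 ≤ A) (hB : 0 ≤ B)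
    (hs : 0 ≤ s) (hnear : ‖y‖ < 1 → |Δ| ≤ A * ‖y‖ ^ 2) (hfar : |Δ| ≤ B * (1 + ‖y‖) ^ lam) :
    |Δ| / ‖y‖ ^ s ≤ (A + 2 ^ s * B) * kernelMajorant s lam y := by
  have hmaj := kernelMajorant_nonneg s lam y
  by_cases hy : ‖y‖ < 1
  · rcases eq_or_ne y 0 with rfl | hy0
    · have : Δ = 0 := abs_eq_zero.1 (le_antisymm (by simpa using hnear hy) (abs_nonneg _))
      simp only [this, abs_zero, zero_div]
      positivity
    have hypos : 0 < ‖y‖ := norm_pos_iff.2 hy0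
    calc |Δ| / ‖y‖ ^ s ≤ A * ‖y‖ ^ 2 / ‖y‖ ^ s := by gcongr; exact hnear hy
      _ = A * ‖y‖ ^ (2 - s) := by rw [mul_div_assoc, rpow_sub hypos, rpow_two]
      _ ≤ A * kernelMajorant s lam y := by
          gcongr
          rw [kernelMajorant, indicator_of_mem (mem_ball_zero_iff.2 hy)]
          exact le_add_of_nonneg_right (by positivity)
      _ ≤ (A + 2 ^ s * B) * kernelMajorant s lam y := by
          gcongr; exact le_add_of_nonneg_right (by positivity)
  · rw [not_lt] at hy
    have hhalf : ((1 + ‖y‖) / 2) ^ s ≤ ‖y‖ ^ s := by gcongr; linarith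
    calc |Δ| / ‖y‖ ^ s ≤ B * (1 + ‖y‖) ^ lam / ((1 + ‖y‖) / 2) ^ s := by gcongr
      _ = 2 ^ s * B * (1 + ‖y‖) ^ (-(s - lam)) := by
          rw [div_rpow (by positivity) zero_le_two, neg_sub, rpow_sub (by positivity)]
          field_simp
      _ ≤ 2 ^ s * B * kernelMajorant s lam y := by
          gcongr
          exact le_add_of_nonneg_left (indicator_nonneg (fun y _ => by positivity) y)
      _ ≤ (A + 2 ^ s * B) * kernelMajorant s lam y := by
          gcongr; exact le_add_of_nonneg_left hA

variable [NormedSpace ℝ E] [FiniteDimensional ℝ E] [MeasurableSpace E] [BorelSpace E]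
  {μ : Measure E} [μ.IsAddHaarMeasure]

lemma integrable_kernelMajorant {s lam : ℝ} (hdim : 1 ≤ finrank ℝ E)
    (hs : s - 2 < finrank ℝ E) (hlam : (finrank ℝ E : ℝ) < s - lam) :
    Integrable (kernelMajorant s lam) μ := by
  refine Integrable.add ?_ (integrable_one_add_norm hlam)
  refine (integrable_indicator_iff measurableSet_ball).2
    (integrableOn_ball_of_norm_le_rpow (C := 1) hdim hs (Filter.Eventually.of_forall fun y => ?_)
      (by fun_prop : Measurable fun y : E => ‖y‖ ^ (2 - s)).aestronglyMeasurable)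
  rw [norm_of_nonneg (by positivity), neg_sub, one_mul]

theorem integrable_secondDiff_div_rpow_and_integral_abs_le {f : E → ℝ} (hf : Continuous f)
    (x : E) {A B s lam : ℝ} (hA : 0 ≤ A) (hB : 0 ≤ B) (hs : 0 ≤ s) (hdim : 1 ≤ finrank ℝ E)
    (hs2 : s - 2 < finrank ℝ E) (hslam : (finrank ℝ E : ℝ) < s - lam)
    (hnear : ∀ y, ‖y‖ < 1 → |2 * f x - f (x + y) - f (x - y)| ≤ A * ‖y‖ ^ 2)
    (hfar : ∀ y, |2 * f x - f (x + y) - f (x - y)| ≤ B * (1 + ‖y‖) ^ lam) :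
    Integrable (fun y => (2 * f x - f (x + y) - f (x - y)) / ‖y‖ ^ s) μ ∧
      ∫ y, |(2 * f x - f (x + y) - f (x - y)) / ‖y‖ ^ s| ∂μ
        ≤ (A + 2 ^ s * B) * ∫ y, kernelMajorant s lam y ∂μ := by
  have hmaj : Integrable (kernelMajorant s lam) μ := integrable_kernelMajorant hdim hs2 hslam
  have hle : ∀ y, |(2 * f x - f (x + y) - f (x - y)) / ‖y‖ ^ s|
      ≤ (A + 2 ^ s * B) * kernelMajorant s lam y := fun y => by
    rw [abs_div, abs_of_nonneg (by positivity : 0 ≤ ‖y‖ ^ s)]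
    exact abs_div_rpow_le_kernelMajorant hA hB hs (hnear y) (hfar y)
  have hint : Integrable (fun y => (2 * f x - f (x + y) - f (x - y)) / ‖y‖ ^ s) μ :=
    (hmaj.const_mul _).mono' (Measurable.div (by fun_prop) (by fun_prop)).aestronglyMeasurable
      (Filter.Eventually.of_forall hle)
  refine ⟨hint, ?_⟩
  rw [← integral_const_mul]
  exact integral_mono hint.abs (hmaj.const_mul _) hle

end Kernel

lemma pow_rpow_neg_div_natCast {X : ℝ} (hX : 0 ≤ X) (lam : ℝ) {k : ℕ} (hk : k ≠ 0) :
    (X ^ k) ^ (-(lam / k)) = X ^ (-lam) := by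
  rw [← rpow_natCast_mul hX]
  congr 1
  field_simp

section Weight

variable {n : ℕ} {lam : ℝ} {kap : ℕ}

lemma weight_pos (x : EuclideanSpace ℝ (Fin n)) : 0 < weight n lam kap x := by
  unfold weight; positivity

lemma continuous_weight : Continuous (weight n lam kap) :=
  (continuous_const.add (continuous_norm.pow kap)).rpow_const fun x =>
    Or.inl (by positivity : (0 : ℝ) < 1 + ‖x‖ ^ kap).ne'

lemma one_add_norm_rpow_neg_le_weight (hlam : 0 ≤ lam) (hkap : kap ≠ 0)
    (x : EuclideanSpace ℝ (Fin n)) : (1 + ‖x‖) ^ (-lam) ≤ weight n lam kap x := by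
  rw [weight, ← pow_rpow_neg_div_natCast (by positivity) lam hkap]
  refine rpow_le_rpow_of_nonpos (by positivity) ?_ (by simp only [neg_nonpos]; positivity)
  simpa using pow_add_pow_le zero_le_one (norm_nonneg x) hkap

lemma weight_le_two_rpow_mul (hlam : 0 ≤ lam) (hkap : kap ≠ 0) (x : EuclideanSpace ℝ (Fin n)) :
    weight n lam kap x ≤ 2 ^ lam * (1 + ‖x‖) ^ (-lam) := by
  have hhalf : ((1 + ‖x‖) / 2) ^ kap ≤ 1 + ‖x‖ ^ kap := by
    have := add_pow_le zero_le_one (norm_nonneg x) kap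
    rw [one_pow] at this
    rw [div_pow, div_le_iff₀ (by positivity)]
    calc (1 + ‖x‖) ^ kap ≤ 2 ^ (kap - 1) * (1 + ‖x‖ ^ kap) := this
      _ ≤ _ := by rw [mul_comm]; gcongr; exacts [one_le_two, Nat.sub_le _ _]
  calc weight n lam kap x ≤ (((1 + ‖x‖) / 2) ^ kap) ^ (-(lam / kap)) :=
        rpow_le_rpow_of_nonpos (by positivity) hhalf (by simp only [neg_nonpos]; positivity)
    _ = 2 ^ lam * (1 + ‖x‖) ^ (-lam) := by
        rw [pow_rpow_neg_div_natCast (by positivity) lam hkap,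
          div_rpow (by positivity) zero_le_two, rpow_neg zero_le_two]
        field_simp

lemma weight_add_le (hlam : 0 ≤ lam) (hkap : kap ≠ 0) (x v : EuclideanSpace ℝ (Fin n)) :
    weight n lam kap (x + v) ≤ 2 ^ lam * (1 + ‖v‖) ^ lam * weight n lam kap x := by
  have peetre : 1 + ‖x‖ ≤ (1 + ‖x + v‖) * (1 + ‖v‖) := by
    have := norm_sub_le (x + v) v
    rw [add_sub_cancel_right] at this
    nlinarith [norm_nonneg (x + v), norm_nonneg v]
  calc weight n lam kap (x + v) ≤ 2 ^ lam * (1 + ‖x + v‖) ^ (-lam) :=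
        weight_le_two_rpow_mul hlam hkap _
    _ ≤ 2 ^ lam * ((1 + ‖x‖) / (1 + ‖v‖)) ^ (-lam) := by
        refine mul_le_mul_of_nonneg_left (rpow_le_rpow_of_nonpos (by positivity) ?_
          (neg_nonpos.2 hlam)) (by positivity)
        rwa [div_le_iff₀ (by positivity)]
    _ = 2 ^ lam * (1 + ‖v‖) ^ lam * (1 + ‖x‖) ^ (-lam) := by
        rw [div_rpow (by positivity) (by positivity), rpow_neg (by positivity),
          rpow_neg (by positivity)]
        field_simp
    _ ≤ 2 ^ lam * (1 + ‖v‖) ^ lam * weight n lam kap x := by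
        gcongr; exact one_add_norm_rpow_neg_le_weight hlam hkap x

lemma abs_two_mul_weight_sub_sub_le (hlam : 0 ≤ lam) (hkap : kap ≠ 0)
    (x y : EuclideanSpace ℝ (Fin n)) :
    |2 * weight n lam kap x - weight n lam kap (x + y) - weight n lam kap (x - y)|
      ≤ (2 + 2 * 2 ^ lam) * (1 + ‖y‖) ^ lam * weight n lam kap x := by
  have hplus := weight_add_le hlam hkap x y
  have hminus := weight_add_le hlam hkap x (-y)
  rw [← sub_eq_add_neg, norm_neg] at hminus
  have h1 : 1 ≤ (1 + ‖y‖) ^ lam := one_le_rpow (by linarith [norm_nonneg y]) hlam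
  have := weight_pos (lam := lam) (kap := kap) x
  have := weight_pos (lam := lam) (kap := kap) (x + y)
  have := weight_pos (lam := lam) (kap := kap) (x - y)
  rw [abs_le]
  constructor <;> nlinarith

lemma exists_abs_two_mul_weight_sub_sub_le_sq (hlam : 0 ≤ lam) (hkap : kap ≠ 0)
    (hke : Even kap) :
    ∃ K, 0 ≤ K ∧ ∀ x y : EuclideanSpace ℝ (Fin n), ‖y‖ ≤ 1 →
      |2 * weight n lam kap x - weight n lam kap (x + y) - weight n lam kap (x - y)|
        ≤ K * ‖y‖ ^ 2 * weight n lam kap x := by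
  obtain ⟨m, rfl⟩ := hke
  set d := lam / ((m + m : ℕ) : ℝ)
  have hd : 0 ≤ d := by positivity
  have hw : ∀ z, weight n lam (m + m) z = weightProfile m d (‖z‖ ^ 2) := fun z => by
    rw [weight, weightProfile, ← pow_mul, two_mul]
  refine ⟨2 * ((4 * (d * (d + 2) * m ^ 2) + 2 * (d * m)) * (2 ^ lam * 2 ^ lam)), by positivity,
    fun x y hy => ?_⟩
  have hM : ∀ t ∈ Icc (-1 : ℝ) 1, weightProfile m d (‖x + t • y‖ ^ 2)
      ≤ 2 ^ lam * 2 ^ lam * weight n lam (m + m) x := fun t ht => by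
    rw [← hw]
    refine (weight_add_le hlam hkap x (t • y)).trans (mul_le_mul_of_nonneg_right
      (mul_le_mul_of_nonneg_left (rpow_le_rpow (by positivity) ?_ hlam) (by positivity))
      (weight_pos x).le)
    rw [norm_smul, Real.norm_eq_abs]
    linarith [mul_le_one₀ (abs_le.2 ht) (norm_nonneg y) hy]
  have := abs_two_mul_sub_sub_comp_norm_sq_le (by positivity) (by positivity)
    (fun s hs => hasDerivAt_weightProfile hs) (fun s hs => hasDerivAt_weightProfileDeriv hs)
    (fun s hs => abs_weightProfileDeriv_le hd hs)
    (fun s hs => mul_abs_weightProfileDeriv2_le (by omega) hd hs) x y hM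
  simp only [← hw] at this
  linarith

theorem exists_integral_abs_weight_secondDiff_div_rpow_le (hn : 1 ≤ n) {α : ℝ} (hα : α < 2)
    (hlam : 0 < lam) (hlamα : lam < α) (hkap : kap ≠ 0) (hke : Even kap) :
    ∃ C > 0, ∀ x : EuclideanSpace ℝ (Fin n),
      Integrable (fun y => (2 * weight n lam kap x - weight n lam kap (x + y)
        - weight n lam kap (x - y)) / ‖y‖ ^ ((n : ℝ) + α)) ∧
      ∫ y, |(2 * weight n lam kap x - weight n lam kap (x + y)
        - weight n lam kap (x - y)) / ‖y‖ ^ ((n : ℝ) + α)| ≤ C * weight n lam kap x := by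
  obtain ⟨K, hK, hnear⟩ := exists_abs_two_mul_weight_sub_sub_le_sq (n := n) hlam.le hkap hke
  set s := (n : ℝ) + α
  set B := 2 + 2 * (2 : ℝ) ^ lam
  set I := ∫ y : EuclideanSpace ℝ (Fin n), kernelMajorant s lam y
  have hI : 0 ≤ I := integral_nonneg (kernelMajorant_nonneg s lam)
  refine ⟨(K + 2 ^ s * B) * I + 1, by positivity, fun x => ?_⟩
  have hwx := weight_pos (lam := lam) (kap := kap) x
  obtain ⟨hint, hle⟩ := integrable_secondDiff_div_rpow_and_integral_abs_le (μ := volume)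
    continuous_weight x (A := K * weight n lam kap x) (B := B * weight n lam kap x) (s := s)
    (lam := lam) (by positivity) (by positivity) (by linarith [n.cast_nonneg (α := ℝ)])
    (by simpa using hn) (by simp; linarith) (by simp; linarith)
    (fun y hy => (hnear x y hy.le).trans_eq (by ring))
    (fun y => (abs_two_mul_weight_sub_sub_le hlam.le hkap x y).trans_eq (by ring))
  refine ⟨hint, hle.trans ?_⟩
  nlinarith

end Weight

theorem stmt_14 (n : ℕ) (hn : 1 ≤ n) (α : ℝ) (hα : α ∈ Set.Ioo (0 : ℝ) 2)
    (lam : ℝ) (hlam : lam ∈ Set.Ioo (0 : ℝ) 1)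
    (kap : ℕ) (hkap : 2 ≤ kap) (hke : Even kap)
    (hcase : 1 ≤ α ∨ 2 * lam < α) :
    (∃ C > 0, ∀ x : EuclideanSpace ℝ (Fin n),
      (∫⁻ y, ENNReal.ofReal
          (|2 * weight n lam kap x - weight n lam kap (x + y) - weight n lam kap (x - y)| /
            ‖y‖ ^ ((n : ℝ) + α))) ≤
        ENNReal.ofReal (C * weight n lam kap x)) ∧
    ∀ Cna : ℝ, 0 < Cna → ∃ C' > 0, ∀ x : EuclideanSpace ℝ (Fin n),
      MeasureTheory.Integrable
        (fun y : EuclideanSpace ℝ (Fin n) =>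
          (2 * weight n lam kap x - weight n lam kap (x + y) - weight n lam kap (x - y)) /
            ‖y‖ ^ ((n : ℝ) + α))
        MeasureTheory.volume ∧
      |Cna / 2 * ∫ y : EuclideanSpace ℝ (Fin n),
          (2 * weight n lam kap x - weight n lam kap (x + y) - weight n lam kap (x - y)) /
            ‖y‖ ^ ((n : ℝ) + α)| ≤ C' * weight n lam kap x := by
  have hlamα : lam < α := by rcases hcase with h | h <;> linarith [hlam.1, hlam.2]
  obtain ⟨C, hC, hbound⟩ := exists_integral_abs_weight_secondDiff_div_rpow_le hn hα.2 hlam.1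
    hlamα (by omega : kap ≠ 0) hke
  refine ⟨⟨C, hC, fun x => ?_⟩, fun Cna hCna => ⟨Cna / 2 * C, by positivity, fun x => ?_⟩⟩
  · obtain ⟨hint, hle⟩ := hbound x
    calc _ = ENNReal.ofReal (∫ y, |(2 * weight n lam kap x - weight n lam kap (x + y)
          - weight n lam kap (x - y)) / ‖y‖ ^ ((n : ℝ) + α)|) := by
          rw [ofReal_integral_eq_lintegral_ofReal hint.abs (ae_of_all _ fun _ => abs_nonneg _)]
          simp_rw [abs_div, abs_of_nonneg (rpow_nonneg (norm_nonneg _) _)]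
      _ ≤ ENNReal.ofReal (C * weight n lam kap x) := ENNReal.ofReal_le_ofReal hle
  · obtain ⟨hint, hle⟩ := hbound x
    refine ⟨hint, ?_⟩
    rw [abs_mul, abs_of_pos (by positivity), mul_assoc]
    gcongr
    exact abs_integral_le_integral_abs.trans hle
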